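/- arXiv:2109.03678 — 2 statements merged into one kernel-verified Lean document; each statement's English description precedes it below -/
import Mathlib

section
/- Let A be an m×n matrix with nonnegative entries, β > 0, ω > 0, η > 0, and L > 0 with 4ω(1+β)/(βL) ≤ 1, and let B = [−ω, 0]^n. Let x ∈ ℝ^n, z₀ ∈ B, define z ∈ B coordinatewise by z_i = Π_{[−ω,0]}( (z₀)_i − ωη ∇̄_i f_r(x) ) (Euclidean projection onto [−ω,0]), and set y = x + (1/(ηL))(z − z₀). Then f_r(x) − f_r(y) ≥ (1/2)⟨∇f_r(x), x − y⟩ ≥ 0. -/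
open scoped BigOperators

/-- The regularized objective `f_r` for the 1-fair packing problem. -/
noncomputable def fr {m n : ℕ} (A : Matrix (Fin m) (Fin n) ℝ) (β : ℝ)
    (x : Fin n → ℝ) : ℝ :=
  -(∑ j, x j) + (β / (1 + β)) *
    ∑ i, (A.mulVec (fun j => Real.exp (x j)) i) ^ ((1 + β) / β)

/-- The `j`-th coordinate of the gradient of `f_r`. -/
noncomputable def gradFr {m n : ℕ} (A : Matrix (Fin m) (Fin n) ℝ) (β : ℝ)
    (x : Fin n → ℝ) (j : Fin n) : ℝ :=
  -1 + ∑ i, (A.mulVec (fun j' => Real.exp (x j')) i) ^ (1 / β) * A i j * Real.exp (x j)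

/-!
Put `p = (1 + β) / β`, `a_ij = A_ij exp x_j`, `g = ∇f_r(x)` and `h = y - x`. Jensen's
inequality for `t ↦ t ^ p` gives
`(∑_j a_ij exp h_j) ^ p ≤ (∑_j a_ij) ^ (p - 1) * ∑_j a_ij exp (p h_j)`,
and `exp v ≤ 1 + v + v²` for `|v| ≤ 1`; summing over the rows yields the quadratic upper model
`f_r(x + h) - f_r(x) ≤ ∑_j (g_j h_j + p (g_j + 1) h_j²)` whenever all `|p h_j| ≤ 1`.
The projected step moves each coordinate against the sign of the truncated gradient
`min 1 g_j`, by at most `|min 1 g_j| / (4p)` thanks to the step-size condition, and this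
bounds the quadratic term by `-g_j h_j / 2`.
-/

open Real Finset

theorem rpow_sum_mul_le_rpow_sum_mul_sum_rpow {ι : Type*} (s : Finset ι) {p : ℝ} (hp : 1 ≤ p)
    {a z : ι → ℝ} (ha : ∀ i ∈ s, 0 ≤ a i) (hz : ∀ i ∈ s, 0 ≤ z i) :
    (∑ i ∈ s, a i * z i) ^ p ≤ (∑ i ∈ s, a i) ^ (p - 1) * ∑ i ∈ s, a i * z i ^ p := by
  set B := ∑ i ∈ s, a i
  rcases (sum_nonneg ha : 0 ≤ B).eq_or_lt with hB | hB
  · have ha0 : ∀ i ∈ s, a i = 0 := (sum_eq_zero_iff_of_nonneg ha).1 hB.symm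
    have hzero : ∀ f : ι → ℝ, ∑ i ∈ s, a i * f i = 0 := fun f =>
      sum_eq_zero fun i hi => by rw [ha0 i hi, zero_mul]
    rw [hzero, hzero, zero_rpow (by positivity), mul_zero]
  have hw : ∑ i ∈ s, a i / B = 1 := by rw [← sum_div, div_self hB.ne']
  have hscale (f : ι → ℝ) : ∑ i ∈ s, a i * f i = B * ∑ i ∈ s, a i / B * f i := by
    rw [mul_sum]
    exact sum_congr rfl fun i _ => by rw [div_mul_eq_mul_div, mul_div_cancel₀ _ hB.ne']
  have hjensen := rpow_arith_mean_le_arith_mean_rpow s (fun i => a i / B) z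
    (fun i hi => div_nonneg (ha i hi) hB.le) hw hz hp
  rw [hscale z, hscale (z · ^ p), mul_rpow hB.le, rpow_sub_one hB.ne', div_mul_eq_mul_div,
    mul_div_assoc, mul_div_cancel_left₀ _ hB.ne']
  · exact mul_le_mul_of_nonneg_left hjensen (rpow_nonneg hB.le p)
  · exact sum_nonneg fun i hi => mul_nonneg (div_nonneg (ha i hi) hB.le) (hz i hi)

theorem rpow_sum_mul_exp_sub_le {ι : Type*} (s : Finset ι) {p : ℝ} (hp : 1 ≤ p)
    {a h : ι → ℝ} (ha : ∀ i ∈ s, 0 ≤ a i) (hh : ∀ i ∈ s, |p * h i| ≤ 1) :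
    (∑ i ∈ s, a i * exp (h i)) ^ p - (∑ i ∈ s, a i) ^ p ≤
      (∑ i ∈ s, a i) ^ (p - 1) * ∑ i ∈ s, a i * (p * h i + (p * h i) ^ 2) := by
  have hexp : ∀ i ∈ s, exp (h i) ^ p ≤ 1 + (p * h i + (p * h i) ^ 2) := fun i hi => by
    rw [← exp_mul, mul_comm]
    linarith [(abs_le.1 (abs_exp_sub_one_sub_id_le (hh i hi))).2]
  have hB : (∑ i ∈ s, a i) ^ (p - 1) * ∑ i ∈ s, a i = (∑ i ∈ s, a i) ^ p := by
    conv_lhs => rhs; rw [← rpow_one (∑ i ∈ s, a i)]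
    rw [← rpow_add' (sum_nonneg ha) (by linarith), sub_add_cancel]
  rw [sub_le_iff_le_add', ← hB, ← mul_add, ← sum_add_distrib]
  calc (∑ i ∈ s, a i * exp (h i)) ^ p
      ≤ (∑ i ∈ s, a i) ^ (p - 1) * ∑ i ∈ s, a i * exp (h i) ^ p :=
        rpow_sum_mul_le_rpow_sum_mul_sum_rpow s hp ha fun i _ => (exp_pos _).le
    _ ≤ (∑ i ∈ s, a i) ^ (p - 1) * ∑ i ∈ s, (a i + a i * (p * h i + (p * h i) ^ 2)) := by
        gcongr with i hi
        · exact rpow_nonneg (sum_nonneg ha) _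
        · nlinarith [ha i hi, hexp i hi]

section Clip

variable {α : Type*} [Ring α] [LinearOrder α] [IsStrictOrderedRing α] {a b c : α}

theorem abs_max_min_sub_le (hac : a ≤ c) (hcb : c ≤ b) (t : α) :
    |max a (min b t) - c| ≤ |t - c| := by
  have h := Set.abs_projIcc_sub_projIcc (hac.trans hcb) (c := t) (d := c)
  rwa [Set.projIcc_of_mem _ ⟨hac, hcb⟩] at h

theorem mul_max_min_sub_nonneg (hac : a ≤ c) (hcb : c ≤ b) (t : α) :
    0 ≤ (t - c) * (max a (min b t) - c) := by
  rcases le_total c t with hct | htc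
  · exact mul_nonneg (sub_nonneg.2 hct) (sub_nonneg.2 (le_max_of_le_right (le_min hcb hct)))
  · exact mul_nonneg_of_nonpos_of_nonpos (sub_nonpos.2 htc)
      (sub_nonpos.2 (max_le hac (min_le_of_right_le htc)))

end Clip

theorem truncated_step_bounds {p g h : ℝ} (hp : 0 ≤ p) (hg : -1 ≤ g)
    (hsign : min 1 g * h ≤ 0) (hsize : p * |h| ≤ |min 1 g| / 4) :
    |p * h| ≤ 1 ∧ g * h ≤ 0 ∧ g * h + p * (g + 1) * h ^ 2 ≤ g * h / 2 := by
  have hG : |min 1 g| ≤ 1 := abs_le.2 ⟨le_min (by norm_num) hg, min_le_left 1 g⟩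
  refine ⟨by rw [abs_mul, abs_of_nonneg hp]; linarith, ?_⟩
  have hquad : p * (g + 1) * h ^ 2 = (p * |h|) * ((g + 1) * |h|) := by
    rw [← sq_abs h]; ring
  have hg1 : 0 ≤ g + 1 := by linarith
  rcases le_total g 1 with hg' | hg'
  · rw [min_eq_right hg'] at hsign hsize
    have hgh : g * h = -(|g| * |h|) := by rw [← abs_mul, abs_of_nonpos hsign, neg_neg]
    refine ⟨hsign, ?_⟩
    rw [hquad, hgh]
    nlinarith [mul_le_mul_of_nonneg_right hsize (mul_nonneg hg1 (abs_nonneg h)),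
      mul_nonneg (mul_nonneg (abs_nonneg g) (abs_nonneg h)) (sub_nonneg.2 hg')]
  · rw [min_eq_left hg', one_mul] at hsign
    rw [min_eq_left hg', abs_one] at hsize
    refine ⟨mul_nonpos_of_nonneg_of_nonpos (by linarith) hsign, ?_⟩
    rw [abs_of_nonpos hsign] at hquad hsize
    rw [hquad]
    nlinarith [mul_le_mul_of_nonneg_right hsize (mul_nonneg hg1 (neg_nonneg.2 hsign)),
      mul_nonneg (sub_nonneg.2 hg') (neg_nonneg.2 hsign)]

theorem projected_step_bounds {ω η L p c g z h : ℝ} (hω : 0 < ω) (hη : 0 < η) (hL : 0 < L)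
    (hp : 0 ≤ p) (hpL : 4 * ω * p ≤ L) (hg : -1 ≤ g) (hc : c ∈ Set.Icc (-ω) 0)
    (hz : z = max (-ω) (min 0 (c - ω * η * min 1 g))) (hh : h = 1 / (η * L) * (z - c)) :
    |p * h| ≤ 1 ∧ g * h ≤ 0 ∧ g * h + p * (g + 1) * h ^ 2 ≤ g * h / 2 := by
  set G := min 1 g
  have hωη : 0 < ω * η := mul_pos hω hη
  have hsign := mul_max_min_sub_nonneg hc.1 hc.2 (c - ω * η * G)
  have hsize := abs_max_min_sub_le hc.1 hc.2 (c - ω * η * G)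
  rw [← hz, sub_sub_cancel_left] at hsign hsize
  rw [abs_neg, abs_mul, abs_of_pos hωη] at hsize
  refine truncated_step_bounds hp hg ?_ ?_
  · have : G * (z - c) ≤ 0 := by nlinarith
    rw [hh, mul_left_comm]
    exact mul_nonpos_of_nonneg_of_nonpos (by positivity) this
  · rw [hh, abs_mul, abs_of_pos (by positivity : 0 < 1 / (η * L))]
    calc p * (1 / (η * L) * |z - c|) ≤ p * (1 / (η * L) * (ω * η * |G|)) := by gcongr
      _ = 4 * ω * p * |G| / (4 * L) := by field_simp
      _ ≤ L * |G| / (4 * L) := by gcongr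
      _ = |G| / 4 := by field_simp

section Objective

variable {m n : ℕ} {A : Matrix (Fin m) (Fin n) ℝ} {β : ℝ}

theorem mulVec_exp_add (x h : Fin n → ℝ) (i : Fin m) :
    A.mulVec (fun j => exp (x j + h j)) i = ∑ j, A i j * exp (x j) * exp (h j) := by
  simp only [Matrix.mulVec, dotProduct, exp_add, mul_assoc]

theorem gradFr_add_one (x : Fin n → ℝ) (j : Fin n) :
    gradFr A β x j + 1 =
      ∑ i, A.mulVec (fun j' => exp (x j')) i ^ (1 / β) * (A i j * exp (x j)) := by
  simp only [gradFr, mul_assoc]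
  ring

theorem mulVec_exp_nonneg (hA : ∀ i j, 0 ≤ A i j) (x : Fin n → ℝ) (i : Fin m) :
    0 ≤ A.mulVec (fun j => exp (x j)) i := by
  simp only [Matrix.mulVec, dotProduct]
  exact sum_nonneg fun j _ => mul_nonneg (hA i j) (exp_pos _).le

theorem neg_one_le_gradFr (hA : ∀ i j, 0 ≤ A i j) (x : Fin n → ℝ) (j : Fin n) :
    -1 ≤ gradFr A β x j := by
  have : 0 ≤ gradFr A β x j + 1 := by
    rw [gradFr_add_one]
    exact sum_nonneg fun i _ => mul_nonneg (rpow_nonneg (mulVec_exp_nonneg hA x i) _)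
      (mul_nonneg (hA i j) (exp_pos _).le)
  linarith

theorem fr_add_sub_fr_le (hA : ∀ i j, 0 ≤ A i j) (hβ : 0 < β) (x h : Fin n → ℝ)
    (hh : ∀ j, |(1 + β) / β * h j| ≤ 1) :
    fr A β (x + h) - fr A β x ≤
      ∑ j, (gradFr A β x j * h j + (1 + β) / β * (gradFr A β x j + 1) * h j ^ 2) := by
  set p := (1 + β) / β with hp_def
  have hp : 1 ≤ p := by rw [le_div_iff₀ hβ]; linarith
  have hp1 : p - 1 = 1 / β := by rw [div_sub_one hβ.ne', add_sub_cancel_right]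
  set B := fun i => A.mulVec (fun j => exp (x j)) i
  calc fr A β (x + h) - fr A β x
      = -∑ j, h j + p⁻¹ * ∑ i, ((∑ j, A i j * exp (x j) * exp (h j)) ^ p - B i ^ p) := by
        rw [fr, fr, ← hp_def, ← inv_div, ← hp_def]
        simp only [mulVec_exp_add, sum_sub_distrib, Pi.add_apply, sum_add_distrib, B]
        ring
    _ ≤ -∑ j, h j +
          p⁻¹ * ∑ i, B i ^ (p - 1) * ∑ j, A i j * exp (x j) * (p * h j + (p * h j) ^ 2) := by
        gcongr with i
        exact rpow_sum_mul_exp_sub_le univ hp (fun j _ => mul_nonneg (hA i j) (exp_pos _).le)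
          fun j _ => hh j
    _ = -∑ j, h j + ∑ j, (gradFr A β x j + 1) * (h j + p * h j ^ 2) := by
        simp only [gradFr_add_one, ← hp1, sum_mul, mul_sum]
        rw [sum_comm]
        refine congrArg _ (sum_congr rfl fun i _ => sum_congr rfl fun j _ => ?_)
        field_simp
        ring
    _ = _ := by
        rw [← sum_neg_distrib, ← sum_add_distrib]
        exact sum_congr rfl fun j _ => by ring

end Objective

/-- Descent Lemma: the gradient-descent point `y` obtained from the projected
(mirror-descent) step on the truncated gradient satisfies the strong descent
condition `f_r(x) - f_r(y) ≥ (1/2)⟨∇f_r(x), x - y⟩ ≥ 0`. -/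
theorem descent_lemma_coord_descent {m n : ℕ}
    (A : Matrix (Fin m) (Fin n) ℝ)
    (hA : ∀ i j, 0 ≤ A i j)
    (β ω η L : ℝ) (hβ : 0 < β) (hω : 0 < ω) (hη : 0 < η) (hL : 0 < L)
    (hstep : 4 * ω * (1 + β) / (β * L) ≤ 1)
    (x z0 z y : Fin n → ℝ)
    (hz0 : ∀ i, z0 i ∈ Set.Icc (-ω) 0)
    (hz : ∀ i, z i = max (-ω) (min 0 (z0 i - ω * η * min 1 (gradFr A β x i))))
    (hy : y = x + (1 / (η * L)) • (z - z0)) :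
    (1 / 2) * ∑ i, gradFr A β x i * (x i - y i) ≤ fr A β x - fr A β y ∧
    0 ≤ (1 / 2) * ∑ i, gradFr A β x i * (x i - y i) := by
  set p := (1 + β) / β
  have hpL : 4 * ω * p ≤ L := by
    rw [div_le_one (by positivity), ← div_le_iff₀' hβ] at hstep
    rwa [mul_div_assoc] at hstep
  set h := y - x
  have hcoord := fun j => projected_step_bounds (h := h j) hω hη hL (by positivity) hpL
    (neg_one_le_gradFr hA x j) (hz0 j) (hz j)
    (by simp only [h, hy, Pi.sub_apply, Pi.smul_apply, smul_eq_mul, add_sub_cancel_left])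
  have hdescent : fr A β y - fr A β x ≤ (∑ j, gradFr A β x j * h j) / 2 := by
    rw [sum_div]
    calc fr A β y - fr A β x = fr A β (x + h) - fr A β x := by rw [add_sub_cancel]
      _ ≤ _ := fr_add_sub_fr_le hA hβ x h fun j => (hcoord j).1
      _ ≤ _ := sum_le_sum fun j _ => (hcoord j).2.2
  have hinner : ∑ j, gradFr A β x j * (x j - y j) = -∑ j, gradFr A β x j * h j := by
    rw [← sum_neg_distrib]
    exact sum_congr rfl fun j _ => by simp only [h, Pi.sub_apply]; ring
  have hdecrease : ∑ j, gradFr A β x j * h j ≤ 0 := sum_nonpos fun j _ => (hcoord j).2.1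
  constructor <;> linarith
end

section
/- Let A be a nonnegative m×n matrix, σ, τ > 0, and ε ∈ (0, 4 min{σ,τ}]. Set δ = ε/2, η = δ/(4 min{σ,τ}), W⁺ = max{σ,τ}, Λ^{(1)} = 1_m, and for k = 1, …, K with K a natural number satisfying K ≥ 32στ log(m)/ε², let p^{(k)} ∈ ℝ_{≥0}^n be points such that the losses ℓ^{(k)} = 1_m − A p^{(k)} lie in [−σ, τ]^m and such that ⟨A^T(Λ^{(k)}/‖Λ^{(k)}‖₁), p^{(k)}⟩ ≤ 1 (the oracle condition), where Λ^{(k+1)} = Λ^{(k)} ⊙ (1_m − (η/W⁺) ℓ^{(k)}). Then the average p̄ = (1/K) Σ_{k=1}^{K} p^{(k)} satisfies ⟨A_i, p̄⟩ ≤ 1 + ε for every row A_i of A, i.e., max_{i∈[m]} ⟨A_i, p̄⟩ ≤ 1 + ε. -/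
/-!
Multiplicative-weights potential argument. With `E = η / max σ τ = ε / (8στ)` every factor
`1 - E ℓ` lies in `[1/2, 3/2]`, so the weights stay positive, and the oracle condition says exactly
that the weighted loss `⟨Λ, ℓ⟩` is nonnegative; hence the potential `∑ᵢ Λᵢ` never increases and
stays at most `m`. For a fixed row `i` this gives `∑ₖ log (1 - E ℓₖ(i)) = log Λ_K(i) ≤ log m`.
Combining `log (1 - x) ≥ -x - x²` (for `x ≤ 1/2`) with `x² ≤ ab + (b - a) x` on `[-a, b]`,
where `a = Eσ`, `b = Eτ`, yields `-E ∑ₖ ℓₖ(i) ≤ 2 (log m + K E² σ τ)`, and the lower bound on `K`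
turns this into `∑ₖ ⟨Aᵢ, pₖ⟩ ≤ K (1 + ε)`.
-/

open Finset Real
open scoped Matrix

lemma neg_sub_sq_le_log_one_sub {x : ℝ} (hx : x ≤ 1 / 2) : -x - x ^ 2 ≤ log (1 - x) := by
  have h1x : 0 < 1 - x := by linarith
  rcases le_total x 0 with hx0 | hx0
  · have hinv : (1 - x) * (1 - (1 - x)⁻¹) = -x := by field_simp; ring
    have hlog := mul_le_mul_of_nonneg_left (one_sub_inv_le_log_of_pos h1x) h1x.le
    nlinarith [pow_two_nonneg x]
  · rw [le_log_iff_exp_le h1x, show -x - x ^ 2 = -(x + x ^ 2) by ring]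
    set t := x + x ^ 2
    have hexp : 1 + t + t ^ 2 / 2 ≤ exp t := quadratic_le_exp_of_nonneg (by positivity)
    -- `(1 + t + t²/2)(1 - x) - 1 = x²(1 - x - x² - x³)/2 ≥ 0` on `[0, 1/2]`
    have hpoly : 1 ≤ (1 + t + t ^ 2 / 2) * (1 - x) := by
      have : 0 ≤ 1 - x - x ^ 2 - x ^ 3 := by nlinarith
      nlinarith [mul_nonneg (sq_nonneg x) this]
    have hinv : exp (-t) * exp t = 1 := by rw [← exp_add, neg_add_cancel, exp_zero]
    nlinarith [exp_pos (-t), mul_le_mul_of_nonneg_left hexp (exp_pos (-t)).le]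

lemma neg_sum_le_of_sum_log_one_sub_le {a b L : ℝ} {K : ℕ} {x : ℕ → ℝ}
    (ha : 0 ≤ a) (ha' : a ≤ 1 / 2) (hb : 0 ≤ b) (hb' : b ≤ 1 / 2) (hL : 0 ≤ L)
    (hx : ∀ k < K, x k ∈ Set.Icc (-a) b) (hlog : ∑ k ∈ range K, log (1 - x k) ≤ L) :
    -∑ k ∈ range K, x k ≤ 2 * (L + K * (a * b)) := by
  -- `(x + a)(b - x) ≥ 0` trades the variance term `x²` for `ab` plus a multiple of `x`.
  have hvar : ∀ k ∈ range K, -x k - (a * b + (b - a) * x k) ≤ log (1 - x k) := fun k hk ↦ by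
    obtain ⟨hxa, hxb⟩ := hx k (mem_range.mp hk)
    have := neg_sub_sq_le_log_one_sub (x := x k) (by linarith)
    nlinarith [mul_nonneg (neg_le_iff_add_nonneg.mp hxa) (sub_nonneg.mpr hxb)]
  have hsum := (sum_le_sum hvar).trans hlog
  simp only [sum_sub_distrib, sum_add_distrib, sum_neg_distrib, sum_const, card_range,
    nsmul_eq_mul, ← mul_sum] at hsum
  set S := -∑ k ∈ range K, x k
  have hK : (0 : ℝ) ≤ K * (a * b) := by positivity
  rcases le_total S 0 with hS | hS
  · linarith
  · nlinarith

namespace MultiplicativeWeights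

variable {ι : Type*} {w ℓ : ℕ → ι → ℝ} {E : ℝ}

lemma weight_eq_prod (hw : ∀ k i, w (k + 1) i = w k i * (1 - E * ℓ k i)) (k : ℕ) (i : ι) :
    w k i = w 0 i * ∏ j ∈ range k, (1 - E * ℓ j i) := by
  induction k with
  | zero => simp
  | succ k ih => rw [hw, ih, prod_range_succ, mul_assoc]

lemma weight_pos (hw : ∀ k i, w (k + 1) i = w k i * (1 - E * ℓ k i)) (hw0 : ∀ i, 0 < w 0 i)
    {k : ℕ} (hstep : ∀ j < k, ∀ i, E * ℓ j i < 1) (i : ι) : 0 < w k i := by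
  rw [weight_eq_prod hw]
  exact mul_pos (hw0 i) (prod_pos fun j hj ↦ sub_pos.mpr (hstep j (mem_range.mp hj) i))

variable [Fintype ι]

lemma sum_weight_succ (hw : ∀ k i, w (k + 1) i = w k i * (1 - E * ℓ k i)) (k : ℕ) :
    ∑ i, w (k + 1) i = ∑ i, w k i - E * ∑ i, w k i * ℓ k i := by
  simp only [hw, mul_sum, ← sum_sub_distrib]
  exact sum_congr rfl fun i _ ↦ by ring

lemma sum_weight_le_sum_weight_zero (hw : ∀ k i, w (k + 1) i = w k i * (1 - E * ℓ k i))
    (hE : 0 ≤ E) {K : ℕ} (hgain : ∀ k < K, 0 ≤ ∑ i, w k i * ℓ k i) :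
    ∑ i, w K i ≤ ∑ i, w 0 i := by
  induction K with
  | zero => rfl
  | succ K ih =>
    rw [sum_weight_succ hw]
    have := mul_nonneg hE (hgain K K.lt_succ_self)
    linarith [ih fun k hk ↦ hgain k (hk.trans K.lt_succ_self)]

lemma sum_log_one_sub_le_log_card (hw : ∀ k i, w (k + 1) i = w k i * (1 - E * ℓ k i))
    (hw0 : ∀ i, w 0 i = 1) (hE : 0 ≤ E) {K : ℕ} (hstep : ∀ k < K, ∀ i, E * ℓ k i < 1)
    (hgain : ∀ k < K, 0 ≤ ∑ i, w k i * ℓ k i) (i : ι) :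
    ∑ k ∈ range K, log (1 - E * ℓ k i) ≤ log (Fintype.card ι) := by
  have hpos := weight_pos hw (fun i ↦ (hw0 i).symm ▸ one_pos) hstep
  have hprod : ∏ k ∈ range K, (1 - E * ℓ k i) = w K i := by
    rw [weight_eq_prod hw, hw0, one_mul]
  have hcard : ∑ j, w 0 j = Fintype.card ι := by simp [hw0]
  rw [← log_prod fun k hk ↦ (sub_pos.mpr (hstep k (mem_range.mp hk) i)).ne', hprod]
  refine log_le_log (hpos i) ?_
  calc w K i ≤ ∑ j, w K j := single_le_sum (fun j _ ↦ (hpos j).le) (mem_univ i)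
    _ ≤ ∑ j, w 0 j := sum_weight_le_sum_weight_zero hw hE hgain
    _ = Fintype.card ι := hcard

lemma neg_sum_loss_le (hw : ∀ k i, w (k + 1) i = w k i * (1 - E * ℓ k i))
    (hw0 : ∀ i, w 0 i = 1) (hE : 0 ≤ E) {a b : ℝ} {K : ℕ} (ha : 0 ≤ a) (hb : 0 ≤ b)
    (haE : E * a ≤ 1 / 2) (hbE : E * b ≤ 1 / 2) (hℓ : ∀ k < K, ∀ i, ℓ k i ∈ Set.Icc (-a) b)
    (hgain : ∀ k < K, 0 ≤ ∑ i, w k i * ℓ k i) (i : ι) :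
    -∑ k ∈ range K, E * ℓ k i ≤ 2 * (log (Fintype.card ι) + K * (E * a * (E * b))) := by
  have hEℓ : ∀ k < K, ∀ i, E * ℓ k i ∈ Set.Icc (-(E * a)) (E * b) := fun k hk i ↦
    ⟨by nlinarith [(hℓ k hk i).1], mul_le_mul_of_nonneg_left (hℓ k hk i).2 hE⟩
  refine neg_sum_le_of_sum_log_one_sub_le (mul_nonneg hE ha) haE (mul_nonneg hE hb) hbE
    (log_natCast_nonneg _) (fun k hk ↦ hEℓ k hk i) ?_
  exact sum_log_one_sub_le_log_card hw hw0 hE (fun k hk i ↦ by linarith [(hEℓ k hk i).2]) hgain i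

end MultiplicativeWeights

lemma sum_mul_one_sub_nonneg_of_sum_normalized_mul_le_one {ι : Type*} [Fintype ι] {w y : ι → ℝ}
    (hw : ∀ i, 0 < w i) (h : ∑ i, w i / (∑ i', |w i'|) * y i ≤ 1) :
    0 ≤ ∑ i, w i * (1 - y i) := by
  cases isEmpty_or_nonempty ι
  · simp
  have hW : 0 < ∑ i, w i := sum_pos (fun i _ ↦ hw i) univ_nonempty
  have hnorm : ∑ i', |w i'| = ∑ i, w i := sum_congr rfl fun i _ ↦ abs_of_pos (hw i)
  simp only [hnorm, div_mul_eq_mul_div, ← sum_div, div_le_one hW] at h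
  simp only [mul_one_sub, sum_sub_distrib]
  linarith

lemma sum_transpose_mulVec_mul {m n : Type*} [Fintype m] [Fintype n]
    (A : Matrix m n ℝ) (v : m → ℝ) (p : n → ℝ) :
    ∑ j, (Aᵀ *ᵥ v) j * p j = ∑ i, v i * (A *ᵥ p) i := by
  change (Aᵀ *ᵥ v) ⬝ᵥ p = v ⬝ᵥ (A *ᵥ p)
  rw [Matrix.mulVec_transpose, Matrix.dotProduct_mulVec]

lemma sum_mul_average_eq {m n : Type*} [Fintype n] (A : Matrix m n ℝ) (p : ℕ → n → ℝ) (K : ℕ)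
    (i : m) :
    ∑ j, A i j * ((1 / K) * ∑ k ∈ range K, p k j) = (∑ k ∈ range K, (A *ᵥ p k) i) / K := by
  simp only [Matrix.mulVec, dotProduct, mul_sum, sum_div]
  rw [sum_comm]
  exact sum_congr rfl fun k _ ↦ sum_congr rfl fun j _ ↦ by ring

theorem pst_guarantee_general {m n : ℕ}
    (A : Matrix (Fin m) (Fin n) ℝ)
    (σ τ ε : ℝ) (hσ : 0 < σ) (hτ : 0 < τ)
    (hε0 : 0 < ε) (hε : ε ≤ 4 * min σ τ)
    (δ η : ℝ) (hδ : δ = ε / 2) (hη : η = δ / (4 * min σ τ))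
    (K : ℕ) (hK : 32 * σ * τ * Real.log m / ε ^ 2 ≤ K)
    (p : ℕ → Fin n → ℝ)
    (Λ : ℕ → Fin m → ℝ) (hΛ0 : Λ 0 = fun _ => 1)
    (hΛ : ∀ k, Λ (k + 1) = fun i => Λ k i * (1 - (η / max σ τ) * (1 - A.mulVec (p k) i)))
    (hwidth : ∀ k < K, ∀ i, (1 - A.mulVec (p k) i) ∈ Set.Icc (-σ) τ)
    (horacle : ∀ k < K,
      ∑ j, A.transpose.mulVec (fun i => Λ k i / ∑ i', |Λ k i'|) j * p k j ≤ 1) :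
    ∀ i, ∑ j, A i j * ((1 / K) * ∑ k ∈ Finset.range K, p k j) ≤ 1 + ε := by
  intro i
  set E := η / max σ τ with hE_def
  have hεE : ε = 8 * (σ * τ) * E := by
    rw [hE_def, hη, hδ, ← min_mul_max σ τ]
    field_simp [(lt_min hσ hτ).ne', (lt_max_of_lt_left hσ).ne']
    ring
  have hE0 : 0 < E := by nlinarith [mul_pos hσ hτ]
  have hσE : E * σ ≤ 1 / 2 := by nlinarith [min_le_right σ τ]
  have hτE : E * τ ≤ 1 / 2 := by nlinarith [min_le_left σ τ]
  have hlogm : log m ≤ 2 * K * (E * σ * (E * τ)) := by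
    rw [div_le_iff₀ (by positivity), hεE] at hK
    nlinarith [mul_pos hσ hτ]
  have hw : ∀ k j, Λ (k + 1) j = Λ k j * (1 - E * (1 - (A *ᵥ p k) j)) :=
    fun k j ↦ congrFun (hΛ k) j
  have hgain : ∀ k < K, 0 ≤ ∑ j, Λ k j * (1 - (A *ᵥ p k) j) := fun k hk ↦
    sum_mul_one_sub_nonneg_of_sum_normalized_mul_le_one
      (MultiplicativeWeights.weight_pos hw (by simp [hΛ0])
        fun l hl j ↦ by nlinarith [(hwidth l (hl.trans hk) j).2])
      (by simpa only [sum_transpose_mulVec_mul] using horacle k hk)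
  have hregret := MultiplicativeWeights.neg_sum_loss_le hw (congrFun hΛ0) hE0.le hσ.le hτ.le
    hσE hτE hwidth hgain i
  rw [Fintype.card_fin] at hregret
  have hsum : -∑ k ∈ range K, E * (1 - (A *ᵥ p k) i) = E * (∑ k ∈ range K, (A *ᵥ p k) i - K) := by
    simp only [mul_sub, mul_one, sum_sub_distrib, sum_const, card_range, nsmul_eq_mul, ← mul_sum]
    ring
  have hrow : E * (∑ k ∈ range K, (A *ᵥ p k) i - K) ≤ E * (ε * K) := by
    rw [← hsum, hεE]
    linarith [show 0 ≤ (K : ℝ) * (E * σ * (E * τ)) by positivity]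
  rw [sum_mul_average_eq]
  exact div_le_of_le_mul₀ K.cast_nonneg (by linarith) (by linarith [le_of_mul_le_mul_left hrow hE0])

/-- PST guarantee: if an oracle produces points `p^{(k)}` whose losses
`1 - A p^{(k)}` lie in `[-σ, τ]` and which satisfy the query constraints given
by the multiplicative weights, then after `K ≥ 32στ log(m)/ε²` rounds the
average point `p̄` satisfies `⟨Aᵢ, p̄⟩ ≤ 1 + ε` for every row. -/
theorem pst_guarantee {m n : ℕ}
    (A : Matrix (Fin m) (Fin n) ℝ) (hA : ∀ i j, 0 ≤ A i j)
    (σ τ ε : ℝ) (hσ : 0 < σ) (hτ : 0 < τ)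
    (hε0 : 0 < ε) (hε : ε ≤ 4 * min σ τ)
    (δ η : ℝ) (hδ : δ = ε / 2) (hη : η = δ / (4 * min σ τ))
    (K : ℕ) (hK : 32 * σ * τ * Real.log m / ε ^ 2 ≤ K)
    (p : ℕ → Fin n → ℝ) (hp : ∀ k < K, ∀ j, 0 ≤ p k j)
    (Λ : ℕ → Fin m → ℝ) (hΛ0 : Λ 0 = fun _ => 1)
    (hΛ : ∀ k, Λ (k + 1) = fun i => Λ k i * (1 - (η / max σ τ) * (1 - A.mulVec (p k) i)))
    (hwidth : ∀ k < K, ∀ i, (1 - A.mulVec (p k) i) ∈ Set.Icc (-σ) τ)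
    (horacle : ∀ k < K,
      ∑ j, A.transpose.mulVec (fun i => Λ k i / ∑ i', |Λ k i'|) j * p k j ≤ 1) :
    ∀ i, ∑ j, A i j * ((1 / K) * ∑ k ∈ Finset.range K, p k j) ≤ 1 + ε :=
  pst_guarantee_general A σ τ ε hσ hτ hε0 hε δ η hδ hη K hK p Λ hΛ0 hΛ hwidth horacle
end
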